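/- arXiv:math/0410571 — 2 statements merged into one kernel-verified Lean document; each statement's English description precedes it below -/
import Mathlib

section
/- Let ψ be a continuous frame for H with sup_x ‖ψ_x‖ ≤ C, w a continuous weight whose associated weight m := m_w is admissible, ‖R‖_{A_m} < ∞, and suppose ψ has property D[δ,m] with respect to a moderate admissible covering U. Fix z ∈ X and set v := m(·,z). Then for each 1 ≤ p ≤ ∞ there exists a constant C' > 0 such that for every F ∈ L^p_w the function R(F)(x) := ∫_X F(y) R(x,y) dμ(y) satisfies |R(F)(x)| ≤ C' v(x) ‖F‖_{L^p_w} for almost every x ∈ X; that is, R maps L^p_w continuously into L^∞_{1/v}. -/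
/-!
Write `g_x(y) = |R(x,y)| m(x,y)`. For a.e. `x` the row bound of `‖R‖_{A_m}` controls `‖g_x‖_{L¹}`,
and property `D[δ,m]` controls `‖g_x‖_{L^∞}`: if `y` and `t` lie in a common `U_i`, then
`y ∈ Q_t`, so `|R(x,y)| ≤ |R(x,t)| + osc_U(x,t)` and `m(x,y) ≤ C_{m,U} m(x,t)`; averaging over
`t ∈ U_i` and using `μ(U_i) ≥ D` gives `g_x(y) ≤ C_{m,U} (δ + ‖R‖_{A_m}) / D`. Bounded in `L¹` and
in `L^∞`, `g_x` is bounded in every `L^q`. Finally `|F(y)| ≤ m(x,z) |F(y)| w(y) m(x,y) / w(z)`, so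
Hölder's inequality with the conjugate exponent of `p` gives
`|R(F)(x)| ≤ m(x,z) ‖F‖_{L^p_w} ‖g_x‖_{L^q} / w(z)`.
-/

open MeasureTheory ENNReal
open scoped ENNReal NNReal

noncomputable section

local notation "⟪" x ", " y "⟫" => @inner ℂ _ _ x y

/-- The weight on `X × X` associated to a weight `w` on `X`. -/
def mw {X : Type*} (w : X → ℝ) (x y : X) : ℝ :=
  max (w x / w y) (w y / w x)

/-- The norm of the Banach algebra `A_m` of kernels on `X × X`. -/
def amNorm {X : Type*} [MeasurableSpace X] (μ : MeasureTheory.Measure X)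
    (m K : X → X → ℝ) : ℝ≥0∞ :=
  max (essSup (fun x => ∫⁻ y, ENNReal.ofReal (|K x y| * m x y) ∂μ) μ)
      (essSup (fun y => ∫⁻ x, ENNReal.ofReal (|K x y| * m x y) ∂μ) μ)

/-- The oscillation kernel `osc_U(x,y) = sup_{z ∈ Q_y} |R(x,y) − R(x,z)|`, where
`Q_y = ∪_{i : y ∈ U_i} U_i`. -/
def oscU {X I : Type*} (R : X → X → ℂ) (U : I → Set X) (x y : X) : ℝ :=
  sSup ((fun z => ‖R x y - R x z‖) '' ⋃ (i : I) (_ : y ∈ U i), U i)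

/-- A moderate admissible covering `U = (U_i)_{i∈I}` of `X`. -/
structure ModCover (X : Type*) [TopologicalSpace X] [MeasurableSpace X]
    (μ : MeasureTheory.Measure X) (I : Type*) where
  U : I → Set X
  measU : ∀ i, MeasurableSet (U i)
  relCompact : ∀ i, IsCompact (closure (U i))
  interiorNonempty : ∀ i, (interior (U i)).Nonempty
  covers : (⋃ i, U i) = Set.univ
  N : ℕ
  overlapFin : ∀ j : I, {i : I | (U i ∩ U j).Nonempty}.Finite
  overlapBound : ∀ j : I, {i : I | (U i ∩ U j).Nonempty}.ncard ≤ N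
  measLower : ℝ≥0∞
  measLowerPos : 0 < measLower
  lower : ∀ i, measLower ≤ μ (U i)
  finiteMeas : ∀ i, μ (U i) < ⊤
  Ctilde : ℝ≥0∞
  CtildeFin : Ctilde < ⊤
  moderate : ∀ i j, (U i ∩ U j).Nonempty → μ (U i) ≤ Ctilde * μ (U j)

section Weight

variable {X : Type*} {w : X → ℝ}

lemma mw_nonneg (hw : ∀ x, 0 < w x) (x y : X) : 0 ≤ mw w x y :=
  le_max_of_le_left (div_pos (hw x) (hw y)).le

lemma mw_comm (w : X → ℝ) (x y : X) : mw w x y = mw w y x := max_comm _ _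

lemma mw_le_mul (hw : ∀ x, 0 < w x) (x t y : X) : mw w x y ≤ mw w x t * mw w t y := by
  have hx := hw x; have ht := hw t; have hy := hw y
  refine max_le ?_ ?_
  · calc w x / w y = w x / w t * (w t / w y) := by field_simp
      _ ≤ mw w x t * mw w t y :=
          mul_le_mul (le_max_left _ _) (le_max_left _ _) (by positivity) (mw_nonneg hw x t)
  · calc w y / w x = w t / w x * (w y / w t) := by field_simp
      _ ≤ mw w x t * mw w t y :=
          mul_le_mul (le_max_right _ _) (le_max_right _ _) (by positivity) (mw_nonneg hw x t)

lemma le_mw_mul_mul_mw (hw : ∀ x, 0 < w x) (x y z : X) :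
    w z ≤ mw w x z * w y * mw w x y := by
  have hdiv : w z / w y ≤ mw w x y * mw w x z := by
    calc w z / w y ≤ mw w y z := le_max_right _ _
      _ ≤ mw w y x * mw w x z := mw_le_mul hw y x z
      _ = mw w x y * mw w x z := by rw [mw_comm w y x]
  rw [div_le_iff₀ (hw y)] at hdiv
  linarith

lemma continuous_mw [TopologicalSpace X] (hw : Continuous w) (hwpos : ∀ x, 0 < w x) (x : X) :
    Continuous (mw w x) :=
  (continuous_const.div hw fun y => (hwpos y).ne').max (hw.div_const _)

end Weight

section Interpolation

variable {α : Type*} [MeasurableSpace α] {μ : Measure α}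

theorem eLpNorm_le_of_lintegral_enorm_le_of_ae_enorm_le {E : Type*} [NormedAddCommGroup E]
    {g : α → E} {q : ℝ≥0∞} (hq : 1 ≤ q) {M : ℝ≥0∞} (h_one : ∫⁻ a, ‖g a‖ₑ ∂μ ≤ M)
    (h_top : ∀ᵐ a ∂μ, ‖g a‖ₑ ≤ M) : eLpNorm g q μ ≤ M := by
  rcases eq_or_ne q ⊤ with rfl | hq_top
  · exact essSup_le_of_ae_le M h_top
  rcases eq_or_ne M ⊤ with rfl | hM
  · exact le_top
  have hr : 1 ≤ q.toReal := by
    simpa using ENNReal.toReal_mono hq_top hq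
  rw [eLpNorm_eq_lintegral_rpow_enorm_toReal (by positivity) hq_top,
    one_div, ENNReal.rpow_inv_le_iff (by positivity)]
  calc ∫⁻ a, ‖g a‖ₑ ^ q.toReal ∂μ
      ≤ ∫⁻ a, M ^ (q.toReal - 1) * ‖g a‖ₑ ∂μ := by
        refine lintegral_mono_ae (h_top.mono fun a ha => ?_)
        calc ‖g a‖ₑ ^ q.toReal = ‖g a‖ₑ ^ (q.toReal - 1) * ‖g a‖ₑ ^ (1 : ℝ) := by
              rw [← ENNReal.rpow_add_of_nonneg _ _ (by linarith) zero_le_one, sub_add_cancel]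
          _ ≤ M ^ (q.toReal - 1) * ‖g a‖ₑ := by
              rw [ENNReal.rpow_one]; gcongr
    _ = M ^ (q.toReal - 1) * ∫⁻ a, ‖g a‖ₑ ∂μ :=
        lintegral_const_mul' _ _ (ENNReal.rpow_ne_top_of_nonneg (by linarith) hM)
    _ ≤ M ^ (q.toReal - 1) * M ^ (1 : ℝ) := by rw [ENNReal.rpow_one]; gcongr
    _ = M ^ q.toReal := by
        rw [← ENNReal.rpow_add_of_nonneg _ _ (by linarith) zero_le_one, sub_add_cancel]

theorem lintegral_enorm_mul_le_eLpNorm_mul {f g : α → ℝ} (hf : AEStronglyMeasurable f μ)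
    (hg : AEStronglyMeasurable g μ) {p : ℝ≥0∞} (hp : 1 ≤ p) {M : ℝ≥0∞}
    (h_one : ∫⁻ a, ‖g a‖ₑ ∂μ ≤ M) (h_top : ∀ᵐ a ∂μ, ‖g a‖ₑ ≤ M) :
    ∫⁻ a, ‖f a * g a‖ₑ ∂μ ≤ eLpNorm f p μ * M := by
  have := ENNReal.HolderConjugate.conjExponent hp
  rw [← eLpNorm_one_eq_lintegral_enorm]
  calc eLpNorm (fun a => f a * g a) 1 μ
      ≤ 1 * eLpNorm f p μ * eLpNorm g p.conjExponent μ :=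
        eLpNorm_le_eLpNorm_mul_eLpNorm'_of_norm hf hg (· * ·) 1 (by simp [norm_mul])
    _ ≤ eLpNorm f p μ * M := by
        rw [one_mul]
        gcongr
        exact eLpNorm_le_of_lintegral_enorm_le_of_ae_enorm_le
          (ENNReal.HolderConjugate.one_le _ p) h_one h_top

end Interpolation

section Oscillation

variable {X I : Type*} {R : X → X → ℂ} {U : I → Set X} {m : X → X → ℝ} {c : ℝ} {x t y : X}
  {i : I}

lemma norm_sub_le_oscU (hbdd : BddAbove (Set.range fun s => ‖R x s‖)) (ht : t ∈ U i)
    (hy : y ∈ U i) : ‖R x t - R x y‖ ≤ oscU R U x t := by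
  obtain ⟨b, hb⟩ := hbdd
  refine le_csSup ⟨‖R x t‖ + b, ?_⟩ ⟨y, Set.mem_iUnion₂.2 ⟨i, ht, hy⟩, rfl⟩
  rintro _ ⟨s, -, rfl⟩
  exact (norm_sub_le _ _).trans (by gcongr; exact hb ⟨s, rfl⟩)

lemma norm_mul_le_of_mem_cover (hm0 : ∀ x y, 0 ≤ m x y)
    (hm_mul : ∀ x t y, m x y ≤ m x t * m t y) (hc : ∀ t ∈ U i, ∀ y ∈ U i, m t y ≤ c)
    (hbdd : BddAbove (Set.range fun s => ‖R x s‖)) (ht : t ∈ U i) (hy : y ∈ U i) :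
    ‖R x y‖ * m x y ≤ c * (|oscU R U x t| * m x t + ‖R x t‖ * m x t) := by
  have hR : ‖R x y‖ ≤ |oscU R U x t| + ‖R x t‖ :=
    calc ‖R x y‖ ≤ ‖R x t - R x y‖ + ‖R x t‖ := by
          rw [norm_sub_rev]; exact norm_le_norm_sub_add _ _
      _ ≤ |oscU R U x t| + ‖R x t‖ := by
        gcongr; exact (norm_sub_le_oscU hbdd ht hy).trans (le_abs_self _)
  have hm : m x y ≤ m x t * c :=
    (hm_mul x t y).trans (mul_le_mul_of_nonneg_left (hc t ht y hy) (hm0 x t))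
  calc ‖R x y‖ * m x y ≤ (|oscU R U x t| + ‖R x t‖) * (m x t * c) :=
        mul_le_mul hR hm (hm0 x y) (by positivity)
    _ = c * (|oscU R U x t| * m x t + ‖R x t‖ * m x t) := by ring

lemma ofReal_norm_mul_mul_measure_le [MeasurableSpace X] {μ : Measure X}
    (hm0 : ∀ x y, 0 ≤ m x y) (hm_mul : ∀ x t y, m x y ≤ m x t * m t y)
    (hc : ∀ t ∈ U i, ∀ y ∈ U i, m t y ≤ c) (hbdd : BddAbove (Set.range fun s => ‖R x s‖))
    (hU : MeasurableSet (U i)) (hmeas : AEMeasurable (fun t => ‖R x t‖ * m x t) μ)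
    (hy : y ∈ U i) :
    ENNReal.ofReal (‖R x y‖ * m x y) * μ (U i) ≤
      ENNReal.ofReal c * (∫⁻ t, ENNReal.ofReal (|oscU R U x t| * m x t) ∂μ +
        ∫⁻ t, ENNReal.ofReal (‖R x t‖ * m x t) ∂μ) := by
  have hc0 : 0 ≤ c := (hm0 y y).trans (hc y hy y hy)
  calc ENNReal.ofReal (‖R x y‖ * m x y) * μ (U i)
      = ∫⁻ _ in U i, ENNReal.ofReal (‖R x y‖ * m x y) ∂μ := (setLIntegral_const _ _).symm
    _ ≤ ∫⁻ t in U i, ENNReal.ofReal c * (ENNReal.ofReal (|oscU R U x t| * m x t) +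
          ENNReal.ofReal (‖R x t‖ * m x t)) ∂μ := by
        refine setLIntegral_mono' hU fun t ht => ?_
        rw [← ENNReal.ofReal_add (mul_nonneg (abs_nonneg _) (hm0 x t))
          (mul_nonneg (norm_nonneg _) (hm0 x t)), ← ENNReal.ofReal_mul hc0]
        exact ENNReal.ofReal_le_ofReal (norm_mul_le_of_mem_cover hm0 hm_mul hc hbdd ht hy)
    _ ≤ ∫⁻ t, ENNReal.ofReal c * (ENNReal.ofReal (|oscU R U x t| * m x t) +
          ENNReal.ofReal (‖R x t‖ * m x t)) ∂μ := setLIntegral_le_lintegral _ _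
    _ = _ := by
        rw [lintegral_const_mul' _ _ ENNReal.ofReal_ne_top,
          lintegral_add_right' _ hmeas.ennreal_ofReal]

theorem ModCover.ofReal_norm_mul_le_div_measLower [TopologicalSpace X] [MeasurableSpace X]
    {μ : Measure X} (𝒰 : ModCover X μ I) (hm0 : ∀ x y, 0 ≤ m x y)
    (hm_mul : ∀ x t y, m x y ≤ m x t * m t y)
    (hc : ∀ i, ∀ t ∈ 𝒰.U i, ∀ y ∈ 𝒰.U i, m t y ≤ c)
    (hbdd : BddAbove (Set.range fun s => ‖R x s‖))
    (hmeas : AEMeasurable (fun t => ‖R x t‖ * m x t) μ) {δ A : ℝ≥0∞}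
    (hosc : ∫⁻ t, ENNReal.ofReal (|oscU R 𝒰.U x t| * m x t) ∂μ ≤ δ)
    (hR : ∫⁻ t, ENNReal.ofReal (‖R x t‖ * m x t) ∂μ ≤ A) (y : X) :
    ENNReal.ofReal (‖R x y‖ * m x y) ≤ ENNReal.ofReal c * (δ + A) / 𝒰.measLower := by
  obtain ⟨i, hy⟩ : ∃ i, y ∈ 𝒰.U i := Set.mem_iUnion.1 (𝒰.covers ▸ Set.mem_univ y)
  rw [ENNReal.le_div_iff_mul_le (Or.inl 𝒰.measLowerPos.ne')
    (Or.inl ((𝒰.lower i).trans_lt (𝒰.finiteMeas i)).ne)]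
  calc ENNReal.ofReal (‖R x y‖ * m x y) * 𝒰.measLower
      ≤ ENNReal.ofReal (‖R x y‖ * m x y) * μ (𝒰.U i) := by gcongr; exact 𝒰.lower i
    _ ≤ _ := ofReal_norm_mul_mul_measure_le hm0 hm_mul (hc i) hbdd (𝒰.measU i) hmeas hy
    _ ≤ ENNReal.ofReal c * (δ + A) := by gcongr

end Oscillation

lemma continuous_inner_left_of_continuous_inner_right {X H : Type*} [TopologicalSpace X]
    [NormedAddCommGroup H] [InnerProductSpace ℂ H] {ψ : X → H}
    (hcont : ∀ f : H, Continuous fun x => ⟪ψ x, f⟫) (f : H) : Continuous fun x => ⟪f, ψ x⟫ := by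
  simpa only [← inner_conj_symm (ψ _) f, starRingEnd_apply, star_star] using (hcont f).star

lemma ae_lintegral_le_amNorm {X : Type*} [MeasurableSpace X] (μ : Measure X)
    (m K : X → X → ℝ) :
    ∀ᵐ x ∂μ, ∫⁻ y, ENNReal.ofReal (|K x y| * m x y) ∂μ ≤ amNorm μ m K :=
  (ae_le_essSup _).mono fun _ hx => hx.trans (le_max_left _ _)

theorem lintegral_enorm_mul_le_mw_mul_eLpNorm {X : Type*} [TopologicalSpace X]
    [MeasurableSpace X] [OpensMeasurableSpace X] {μ : Measure X} {w : X → ℝ}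
    (hw : Continuous w) (hwpos : ∀ x, 0 < w x) {F k : X → ℂ} (hF : AEStronglyMeasurable F μ)
    (hk : AEStronglyMeasurable k μ) {p : ℝ≥0∞} (hp : 1 ≤ p) (x z : X) {M : ℝ≥0∞}
    (h_one : ∫⁻ y, ENNReal.ofReal (‖k y‖ * mw w x y) ∂μ ≤ M)
    (h_top : ∀ y, ENNReal.ofReal (‖k y‖ * mw w x y) ≤ M) :
    ∫⁻ y, ‖F y * k y‖ₑ ∂μ ≤
      ENNReal.ofReal ((w z)⁻¹ * mw w x z) * (eLpNorm (fun y => ‖F y‖ * w y) p μ * M) := by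
  set g := fun y => ‖k y‖ * mw w x y
  have hg_enorm : ∀ y, ‖g y‖ₑ = ENNReal.ofReal (g y) := fun y =>
    Real.enorm_of_nonneg (mul_nonneg (norm_nonneg _) (mw_nonneg hwpos x y))
  have hwz : 0 ≤ (w z)⁻¹ := inv_nonneg.2 (hwpos z).le
  have hc : 0 ≤ (w z)⁻¹ * mw w x z := mul_nonneg hwz (mw_nonneg hwpos x z)
  have hpt : ∀ y, ‖F y * k y‖ₑ ≤ ‖(w z)⁻¹ * mw w x z‖ₑ * ‖(‖F y‖ * w y) * g y‖ₑ := by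
    intro y
    rw [← enorm_mul, enorm_le_iff_norm_le, norm_mul]
    refine le_trans ?_ (le_abs_self _)
    calc ‖F y‖ * ‖k y‖ = (w z)⁻¹ * w z * (‖F y‖ * ‖k y‖) := by field_simp [(hwpos z).ne']
      _ ≤ (w z)⁻¹ * (mw w x z * w y * mw w x y) * (‖F y‖ * ‖k y‖) := by
        gcongr ?_ * _
        exact mul_le_mul_of_nonneg_left (le_mw_mul_mul_mw hwpos x y z) hwz
      _ = (w z)⁻¹ * mw w x z * (‖F y‖ * w y * g y) := by ring
  calc ∫⁻ y, ‖F y * k y‖ₑ ∂μ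
      ≤ ∫⁻ y, ‖(w z)⁻¹ * mw w x z‖ₑ * ‖(‖F y‖ * w y) * g y‖ₑ ∂μ := lintegral_mono hpt
    _ = ‖(w z)⁻¹ * mw w x z‖ₑ * ∫⁻ y, ‖(‖F y‖ * w y) * g y‖ₑ ∂μ :=
        lintegral_const_mul' _ _ enorm_ne_top
    _ ≤ ‖(w z)⁻¹ * mw w x z‖ₑ * (eLpNorm (fun y => ‖F y‖ * w y) p μ * M) := by
        gcongr
        refine lintegral_enorm_mul_le_eLpNorm_mul (g := g) (hF.norm.mul hw.aestronglyMeasurable)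
          (hk.norm.mul (continuous_mw hw hwpos x).aestronglyMeasurable) hp ?_ ?_
        · exact (lintegral_congr hg_enorm).trans_le h_one
        · exact Filter.Eventually.of_forall fun y => (hg_enorm y).trans_le (h_top y)
    _ = _ := by rw [Real.enorm_of_nonneg hc]

theorem R_maps_Lpw_into_Linfty_invv_general
    {X : Type*} [TopologicalSpace X]
    [MeasurableSpace X] [BorelSpace X]
    (μ : MeasureTheory.Measure X)
    {H : Type*} [NormedAddCommGroup H] [InnerProductSpace ℂ H]
    (ψ : X → H)
    (hcont : ∀ f : H, Continuous fun x => ⟪ψ x, f⟫)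
    (Sinv : H →L[ℂ] H)
    (C : ℝ) (hψbd : ∀ x, ‖ψ x‖ ≤ C)
    (w : X → ℝ) (hw : Continuous w) (hwpos : ∀ x, 0 < w x)
    (hR : amNorm μ (mw w) (fun x y => ‖⟪Sinv (ψ x), ψ y⟫‖) < ⊤)
    {I : Type*}
    (𝒰 : ModCover X μ I)
    (CmU : ℝ) (hcover : ∀ i, ∀ x ∈ 𝒰.U i, ∀ y ∈ 𝒰.U i, mw w x y ≤ CmU)
    (δ : ℝ)
    (hosc : amNorm μ (mw w) (oscU (fun x y => ⟪Sinv (ψ x), ψ y⟫) 𝒰.U) <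
      ENNReal.ofReal δ)
    (z : X) :
    ∀ p : ℝ≥0∞, 1 ≤ p →
      ∃ C' : ℝ≥0∞, 0 < C' ∧ C' < ⊤ ∧
        ∀ F : X → ℂ, AEStronglyMeasurable F μ →
          MeasureTheory.eLpNorm (fun x => ‖F x‖ * w x) p μ < ⊤ →
          (∀ᵐ x ∂μ, Integrable (fun y => F y * ⟪Sinv (ψ x), ψ y⟫) μ) ∧
          ∀ᵐ x ∂μ, (‖∫ y, F y * ⟪Sinv (ψ x), ψ y⟫ ∂μ‖₊ : ℝ≥0∞) ≤
            C' * ENNReal.ofReal (mw w x z) *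
              MeasureTheory.eLpNorm (fun x => ‖F x‖ * w x) p μ := by
  intro p hp
  have hRcont : ∀ x, Continuous fun y => ⟪Sinv (ψ x), ψ y⟫ := fun x =>
    continuous_inner_left_of_continuous_inner_right hcont _
  have hRbdd : ∀ x, BddAbove (Set.range fun y => ‖⟪Sinv (ψ x), ψ y⟫‖) := fun x =>
    ⟨‖Sinv (ψ x)‖ * C, by
      rintro _ ⟨y, rfl⟩
      exact (norm_inner_le_norm _ _).trans (by gcongr; exact hψbd y)⟩
  set A := amNorm μ (mw w) (fun x y => ‖⟪Sinv (ψ x), ψ y⟫‖)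
  set B := ENNReal.ofReal CmU * (ENNReal.ofReal δ + A) / 𝒰.measLower
  have hB : B ≠ ⊤ := ENNReal.div_ne_top (by finiteness) 𝒰.measLowerPos.ne'
  refine ⟨ENNReal.ofReal (w z)⁻¹ * (A + B + 1),
    ENNReal.mul_pos (by simpa using hwpos z) (by positivity), by finiteness, fun F hF hFw => ?_⟩
  have hbound : ∀ᵐ x ∂μ, ∫⁻ y, ‖F y * ⟪Sinv (ψ x), ψ y⟫‖ₑ ∂μ ≤
      ENNReal.ofReal (w z)⁻¹ * (A + B + 1) * ENNReal.ofReal (mw w x z) *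
        eLpNorm (fun x => ‖F x‖ * w x) p μ := by
    filter_upwards [ae_lintegral_le_amNorm μ (mw w) fun x y => ‖⟪Sinv (ψ x), ψ y⟫‖,
      ae_lintegral_le_amNorm μ (mw w) (oscU (fun x y => ⟪Sinv (ψ x), ψ y⟫) 𝒰.U)] with x hRx hoscx
    simp only [abs_norm] at hRx
    have hmeas := ((hRcont x).norm.mul (continuous_mw hw hwpos x)).aemeasurable (μ := μ)
    have hsup := 𝒰.ofReal_norm_mul_le_div_measLower (mw_nonneg hwpos) (mw_le_mul hwpos) hcover
      (hRbdd x) hmeas (hoscx.trans hosc.le) hRx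
    refine (lintegral_enorm_mul_le_mw_mul_eLpNorm hw hwpos hF
      (hRcont x).aestronglyMeasurable hp x z (M := A + B + 1) ?_ ?_).trans_eq ?_
    · exact hRx.trans (le_self_add.trans le_self_add)
    · exact fun y => (hsup y).trans (le_add_self.trans le_self_add)
    · rw [ENNReal.ofReal_mul (inv_nonneg.2 (hwpos z).le)]; ring
  refine ⟨hbound.mono fun x hx => ⟨hF.mul (hRcont x).aestronglyMeasurable, hx.trans_lt ?_⟩,
    hbound.mono fun x hx => (enorm_integral_le_lintegral_enorm _).trans hx⟩
  finiteness

/-- Under property `D[δ,m]` the kernel `R` maps `L^p_w` continuously into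
`L^∞_{1/v}`:  `|R(F)(x)| ≤ C'·v(x)·‖F‖_{L^p_w}` for a.e. `x`. -/
theorem R_maps_Lpw_into_Linfty_invv
    {X : Type*} [TopologicalSpace X] [T2Space X] [LocallyCompactSpace X]
    [SigmaCompactSpace X] [MeasurableSpace X] [BorelSpace X]
    (μ : MeasureTheory.Measure X) [μ.Regular] [μ.IsOpenPosMeasure]
    {H : Type*} [NormedAddCommGroup H] [InnerProductSpace ℂ H] [CompleteSpace H]
    [TopologicalSpace.SeparableSpace H]
    (ψ : X → H)
    (hcont : ∀ f : H, Continuous fun x => ⟪ψ x, f⟫)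
    (C₁ C₂ : ℝ) (hC₁ : 0 < C₁) (hC₁₂ : C₁ ≤ C₂)
    (hInt : ∀ f : H, Integrable (fun x => ‖⟪ψ x, f⟫‖ ^ 2) μ)
    (hlow : ∀ f : H, C₁ * ‖f‖ ^ 2 ≤ ∫ x, ‖⟪ψ x, f⟫‖ ^ 2 ∂μ)
    (hup : ∀ f : H, ∫ x, ‖⟪ψ x, f⟫‖ ^ 2 ∂μ ≤ C₂ * ‖f‖ ^ 2)
    (S : H →L[ℂ] H)
    (hS : ∀ f g : H, ⟪g, S f⟫ = ∫ x, ⟪ψ x, f⟫ * ⟪g, ψ x⟫ ∂μ)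
    (Sinv : H →L[ℂ] H)
    (hleft : ∀ f, Sinv (S f) = f) (hright : ∀ f, S (Sinv f) = f)
    (C : ℝ) (hψbd : ∀ x, ‖ψ x‖ ≤ C)
    (w : X → ℝ) (hw : Continuous w) (hwpos : ∀ x, 0 < w x)
    (hR : amNorm μ (mw w) (fun x y => ‖⟪Sinv (ψ x), ψ y⟫‖) < ⊤)
    {I : Type*} [Countable I]
    (𝒰 : ModCover X μ I)
    (CmU : ℝ) (hcover : ∀ i, ∀ x ∈ 𝒰.U i, ∀ y ∈ 𝒰.U i, mw w x y ≤ CmU)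
    (δ : ℝ) (hδ : 0 < δ)
    (hosc : amNorm μ (mw w) (oscU (fun x y => ⟪Sinv (ψ x), ψ y⟫) 𝒰.U) <
      ENNReal.ofReal δ)
    (z : X) :
    ∀ p : ℝ≥0∞, 1 ≤ p →
      ∃ C' : ℝ≥0∞, 0 < C' ∧ C' < ⊤ ∧
        ∀ F : X → ℂ, AEStronglyMeasurable F μ →
          MeasureTheory.eLpNorm (fun x => ‖F x‖ * w x) p μ < ⊤ →
          (∀ᵐ x ∂μ, Integrable (fun y => F y * ⟪Sinv (ψ x), ψ y⟫) μ) ∧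
          ∀ᵐ x ∂μ, (‖∫ y, F y * ⟪Sinv (ψ x), ψ y⟫ ∂μ‖₊ : ℝ≥0∞) ≤
            C' * ENNReal.ofReal (mw w x z) *
              MeasureTheory.eLpNorm (fun x => ‖F x‖ * w x) p μ :=
  R_maps_Lpw_into_Linfty_invv_general μ ψ hcont Sinv C hψbd w hw hwpos hR 𝒰 CmU hcover δ hosc z
end
end

section
/- Let F = (ψ_x)_{x∈X} and G = (φ_x)_{x∈X} be continuous frames for H with frame operators S_F, S_G and kernels R_F(x,y) = ⟨ψ_y, S_F⁻¹ψ_x⟩, R_G(x,y) = ⟨φ_y, S_G⁻¹φ_x⟩; let the crossed Gramian be G(F,G)(x,y) := ⟨φ_y, ψ_x⟩. Let m be an admissible weight, assume ‖G(F,G)‖_{A_m} < ∞, ‖R_F‖_{A_m} < ∞, ‖R_G‖_{A_m} < ∞, and suppose there is a single moderate admissible covering U = (U_i)_{i∈I} satisfying the m-cover condition with respect to which both frames have property D[δ,m], i.e., the oscillation kernels osc_U^F(x,y) = sup_{z∈Q_y}|R_F(x,y) − R_F(x,z)| and osc_U^G(x,y) = sup_{z∈Q_y}|R_G(x,y) −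 R_G(x,z)| both have A_m-norm < δ. Choose points x_i, y_i ∈ U_i. Then the sampled crossed Gramian matrix belongs to A_m^♭: the kernel Λ_U(x,y) := Σ_{i,j∈I} |⟨φ_{y_j}, ψ_{x_i}⟩| χ_{U_i}(x) χ_{U_j}(y) satisfies ‖Λ_U‖_{A_m} < ∞. -/
open MeasureTheory ENNReal
open scoped ENNReal NNReal

noncomputable section

local notation "⟪" x ", " y "⟫" => @inner ℂ _ _ x y

/-- superadditivity of the lower integral over countable sums, no measurability -/
lemma tsum_lintegral_le' {X : Type*} [MeasurableSpace X] {μ : Measure X}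
    {ι : Type*} (f : ι → X → ℝ≥0∞) :
    ∑' i, ∫⁻ x, f i x ∂μ ≤ ∫⁻ x, ∑' i, f i x ∂μ := by
  rw [ENNReal.tsum_eq_iSup_sum]
  refine iSup_le fun s => ?_
  classical
  have h1 : ∑ i ∈ s, ∫⁻ x, f i x ∂μ ≤ ∫⁻ x, ∑ i ∈ s, f i x ∂μ := by
    induction s using Finset.induction with
    | empty => simp
    | insert a s' h ih =>
      rw [Finset.sum_insert h]
      refine le_trans (add_le_add_right ih _) ?_
      refine le_trans (le_lintegral_add _ _) (le_of_eq ?_)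
      congr 1; funext x; rw [Finset.sum_insert h]
  exact h1.trans <| lintegral_mono fun x =>
    Summable.sum_le_tsum s (fun _ _ => zero_le) ENNReal.summable

lemma ofReal_tsum_le' {ι : Type*} (f : ι → ℝ) (hf : ∀ i, 0 ≤ f i) :
    ENNReal.ofReal (∑' i, f i) ≤ ∑' i, ENNReal.ofReal (f i) := by
  by_cases h : Summable f
  · rw [ENNReal.ofReal_tsum_of_nonneg hf h]
  · rw [tsum_eq_zero_of_not_summable h]; simp

/-- the oscillation kernel bounds pointwise differences. -/
lemma le_oscU' {X : Type*} [TopologicalSpace X] {I : Type*} {R : X → X → ℂ} {U : I → Set X}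
    {x y z : X}
    (hR : Continuous fun w => R x w)
    (hU : ∀ i, IsCompact (closure (U i)))
    (hfin : {i : I | y ∈ U i}.Finite)
    {i : I} (hy : y ∈ U i) (hz : z ∈ U i) :
    ‖R x y - R x z‖ ≤ oscU R U x y := by
  have hmem : z ∈ ⋃ (i : I) (_ : y ∈ U i), U i :=
    Set.mem_iUnion.2 ⟨i, Set.mem_iUnion.2 ⟨hy, hz⟩⟩
  refine le_csSup ?_ ⟨z, hmem, rfl⟩
  have hQ : (⋃ (i : I) (_ : y ∈ U i), U i) = ⋃ i ∈ {i : I | y ∈ U i}, U i := rfl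
  rw [hQ, Set.image_iUnion₂]
  rw [Set.Finite.bddAbove_biUnion hfin]
  intro i hi
  have hb : BddAbove ((fun w => ‖R x y - R x w‖) '' closure (U i)) :=
    ((hU i).image_of_continuousOn
      (((continuous_const.sub hR).norm).continuousOn)).bddAbove
  exact hb.mono (Set.image_mono subset_closure)

lemma selfadj_inv' {X : Type*} [MeasurableSpace X] {μ : Measure X}
    {H : Type*} [NormedAddCommGroup H] [InnerProductSpace ℂ H]
    {ψ : X → H} {S Sinv : H →L[ℂ] H}
    (hS : ∀ f g : H, ⟪g, S f⟫ = ∫ x, ⟪ψ x, f⟫ * ⟪g, ψ x⟫ ∂μ)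
    (hr : ∀ f, S (Sinv f) = f) :
    ∀ a b : H, ⟪Sinv a, b⟫ = ⟪a, Sinv b⟫ := by
  have hsymm : ∀ a b : H, ⟪b, S a⟫ = ⟪S b, a⟫ := by
    intro a b
    calc ⟪b, S a⟫ = ∫ x, ⟪ψ x, a⟫ * ⟪b, ψ x⟫ ∂μ := hS a b
      _ = ∫ x, (starRingEnd ℂ) (⟪ψ x, b⟫ * ⟪a, ψ x⟫) ∂μ := by
          congr 1; funext x
          rw [map_mul, inner_conj_symm, inner_conj_symm]; ring
      _ = (starRingEnd ℂ) (∫ x, ⟪ψ x, b⟫ * ⟪a, ψ x⟫ ∂μ) := integral_conj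
      _ = (starRingEnd ℂ) ⟪a, S b⟫ := by rw [hS b a]
      _ = ⟪S b, a⟫ := inner_conj_symm _ _
  intro a b
  calc ⟪Sinv a, b⟫ = ⟪Sinv a, S (Sinv b)⟫ := by rw [hr]
    _ = ⟪S (Sinv a), Sinv b⟫ := hsymm (Sinv b) (Sinv a)
    _ = ⟪a, Sinv b⟫ := by rw [hr]
lemma star_bound' {X : Type*} [MeasurableSpace X] {μ : Measure X}
    {H : Type*} [NormedAddCommGroup H] [InnerProductSpace ℂ H] [CompleteSpace H]
    {ψ φf : X → H} {SF SFinv SG SGinv : H →L[ℂ] H}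
    (hSF : ∀ f g : H, ⟪g, SF f⟫ = ∫ x, ⟪ψ x, f⟫ * ⟪g, ψ x⟫ ∂μ)
    (hrightF : ∀ f, SF (SFinv f) = f)
    (hSG : ∀ f g : H, ⟪g, SG f⟫ = ∫ x, ⟪φf x, f⟫ * ⟪g, φf x⟫ ∂μ)
    (hrightG : ∀ f, SG (SGinv f) = f)
    (hadjF : ∀ a b : H, ⟪SFinv a, b⟫ = ⟪a, SFinv b⟫)
    (hadjG : ∀ a b : H, ⟪SGinv a, b⟫ = ⟪a, SGinv b⟫)
    (m : X → X → ℝ) (hm_one : ∀ x y, 1 ≤ m x y)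
    (hm_symm : ∀ x y, m x y = m y x)
    (hm_submult : ∀ x y z, m x y ≤ m x z * m z y)
    (a b : X) :
    ENNReal.ofReal (‖⟪ψ a, φf b⟫‖ * m a b) ≤
      ∫⁻ u, ENNReal.ofReal (‖⟪SFinv (ψ u), ψ a⟫‖ * m u a) *
        (∫⁻ v, ENNReal.ofReal (‖⟪ψ u, φf v⟫‖ * m u v) *
          ENNReal.ofReal (‖⟪SGinv (φf v), φf b⟫‖ * m v b) ∂μ) ∂μ := by
  have hmn : ∀ x y : X, (0:ℝ) ≤ m x y := fun x y => le_trans zero_le_one (hm_one x y)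
  set A : X → ℝ≥0∞ := fun u => ENNReal.ofReal ‖⟪SFinv (ψ u), ψ a⟫‖ with hA
  set Bf : X → X → ℝ≥0∞ := fun u v => ENNReal.ofReal ‖⟪ψ u, φf v⟫‖ with hB
  set C : X → ℝ≥0∞ := fun v => ENNReal.ofReal ‖⟪SGinv (φf v), φf b⟫‖ with hC
  have key1 : ⟪φf b, ψ a⟫ = ∫ u, ⟪ψ u, SFinv (ψ a)⟫ * ⟪φf b, ψ u⟫ ∂μ := by
    have h := hSF (SFinv (ψ a)) (φf b); rwa [hrightF] at h
  have key2 : ∀ u : X, ⟪ψ u, φf b⟫ = ∫ v, ⟪φf v, SGinv (φf b)⟫ * ⟪ψ u, φf v⟫ ∂μ := fun u => by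
    have h := hSG (SGinv (φf b)) (ψ u); rwa [hrightG] at h
  have h2 : ∀ u, ENNReal.ofReal ‖⟪φf b, ψ u⟫‖ ≤ ∫⁻ v, C v * Bf u v ∂μ := by
    intro u
    rw [norm_inner_symm, key2 u, ofReal_norm]
    refine (enorm_integral_le_lintegral_enorm _).trans (lintegral_mono fun v => ?_)
    rw [← ofReal_norm, norm_mul, ENNReal.ofReal_mul (norm_nonneg _),
      ← hadjG (φf v) (φf b)]
  have h1 : ENNReal.ofReal ‖⟪φf b, ψ a⟫‖ ≤
      ∫⁻ u, A u * ENNReal.ofReal ‖⟪φf b, ψ u⟫‖ ∂μ := by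
    rw [key1, ofReal_norm]
    refine (enorm_integral_le_lintegral_enorm _).trans (lintegral_mono fun u => ?_)
    rw [← ofReal_norm, norm_mul, ENNReal.ofReal_mul (norm_nonneg _),
      ← hadjF (ψ u) (ψ a)]
  have hw : ∀ u v : X, ENNReal.ofReal (m a b) ≤
      ENNReal.ofReal (m u a) * (ENNReal.ofReal (m u v) * ENNReal.ofReal (m v b)) := by
    intro u v
    have h0 : m a b ≤ m u a * (m u v * m v b) := by
      calc m a b ≤ m a u * m u b := hm_submult a b u
        _ ≤ m a u * (m u v * m v b) :=
          mul_le_mul_of_nonneg_left (hm_submult u b v) (hmn a u)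
        _ = m u a * (m u v * m v b) := by rw [hm_symm a u]
    calc ENNReal.ofReal (m a b) ≤ ENNReal.ofReal (m u a * (m u v * m v b)) :=
          ENNReal.ofReal_le_ofReal h0
      _ = _ := by rw [ENNReal.ofReal_mul (hmn u a), ENNReal.ofReal_mul (hmn u v)]
  calc ENNReal.ofReal (‖⟪ψ a, φf b⟫‖ * m a b)
      = ENNReal.ofReal ‖⟪φf b, ψ a⟫‖ * ENNReal.ofReal (m a b) := by
        rw [ENNReal.ofReal_mul (norm_nonneg _), norm_inner_symm]
    _ ≤ (∫⁻ u, A u * ENNReal.ofReal ‖⟪φf b, ψ u⟫‖ ∂μ) * ENNReal.ofReal (m a b) :=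
        mul_le_mul_left h1 _
    _ = ∫⁻ u, (A u * ENNReal.ofReal ‖⟪φf b, ψ u⟫‖) * ENNReal.ofReal (m a b) ∂μ :=
        (lintegral_mul_const' _ _ ENNReal.ofReal_ne_top).symm
    _ ≤ ∫⁻ u, (A u * (∫⁻ v, C v * Bf u v ∂μ)) * ENNReal.ofReal (m a b) ∂μ := by
        refine lintegral_mono fun u => ?_
        exact mul_le_mul_left (mul_le_mul_right (h2 u) _) _
    _ ≤ ∫⁻ u, (A u * ENNReal.ofReal (m u a)) *
          (∫⁻ v, (Bf u v * ENNReal.ofReal (m u v)) * (C v * ENNReal.ofReal (m v b)) ∂μ) ∂μ := by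
        refine lintegral_mono fun u => ?_
        calc (A u * (∫⁻ v, C v * Bf u v ∂μ)) * ENNReal.ofReal (m a b)
            = A u * ∫⁻ v, (C v * Bf u v) * ENNReal.ofReal (m a b) ∂μ := by
              rw [lintegral_mul_const' _ _ ENNReal.ofReal_ne_top]; ring
          _ ≤ A u * ∫⁻ v, (C v * Bf u v) *
                (ENNReal.ofReal (m u a) * (ENNReal.ofReal (m u v) * ENNReal.ofReal (m v b))) ∂μ := by
              refine mul_le_mul_right (lintegral_mono fun v => mul_le_mul_right (hw u v) _) _
          _ = A u * ∫⁻ v, ENNReal.ofReal (m u a) *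
                ((Bf u v * ENNReal.ofReal (m u v)) * (C v * ENNReal.ofReal (m v b))) ∂μ := by
              congr 1; exact lintegral_congr fun v => by ring
          _ = A u * (ENNReal.ofReal (m u a) *
                ∫⁻ v, (Bf u v * ENNReal.ofReal (m u v)) * (C v * ENNReal.ofReal (m v b)) ∂μ) := by
              rw [lintegral_const_mul' _ _ ENNReal.ofReal_ne_top]
          _ = _ := by ring
    _ = _ := by
        refine lintegral_congr fun u => ?_
        have e1 : ENNReal.ofReal (‖⟪SFinv (ψ u), ψ a⟫‖ * m u a) =
            A u * ENNReal.ofReal (m u a) := ENNReal.ofReal_mul (norm_nonneg _)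
        have e2 : ∀ v : X, ENNReal.ofReal (‖⟪ψ u, φf v⟫‖ * m u v) *
              ENNReal.ofReal (‖⟪SGinv (φf v), φf b⟫‖ * m v b)
            = (Bf u v * ENNReal.ofReal (m u v)) * (C v * ENNReal.ofReal (m v b)) := fun v => by
          rw [ENNReal.ofReal_mul (norm_nonneg _), ENNReal.ofReal_mul (norm_nonneg _)]
        rw [e1, lintegral_congr e2]

lemma row_bound {X : Type*} [TopologicalSpace X] [MeasurableSpace X] [BorelSpace X]
    (μ : Measure X)
    {H : Type*} [NormedAddCommGroup H] [InnerProductSpace ℂ H] [CompleteSpace H]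
    (ψ φf : X → H)
    (hcontF : ∀ f : H, Continuous fun x => ⟪ψ x, f⟫)
    (hcontG : ∀ f : H, Continuous fun x => ⟪φf x, f⟫)
    (SF : H →L[ℂ] H)
    (hSF : ∀ f g : H, ⟪g, SF f⟫ = ∫ x, ⟪ψ x, f⟫ * ⟪g, ψ x⟫ ∂μ)
    (SFinv : H →L[ℂ] H) (hrightF : ∀ f, SF (SFinv f) = f)
    (SG : H →L[ℂ] H)
    (hSG : ∀ f g : H, ⟪g, SG f⟫ = ∫ x, ⟪φf x, f⟫ * ⟪g, φf x⟫ ∂μ)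
    (SGinv : H →L[ℂ] H) (hrightG : ∀ f, SG (SGinv f) = f)
    (m : X → X → ℝ)
    (hm_cont : Continuous fun p : X × X => m p.1 p.2)
    (hm_one : ∀ x y, 1 ≤ m x y)
    (hm_symm : ∀ x y, m x y = m y x)
    (hm_submult : ∀ x y z, m x y ≤ m x z * m z y)
    {I : Type*} [Countable I]
    (U : I → Set X) (measU : ∀ i, MeasurableSet (U i))
    (relCompact : ∀ i, IsCompact (closure (U i)))
    (N : ℕ)
    (hfin : ∀ x : X, {i : I | x ∈ U i}.Finite)
    (hcard : ∀ x : X, {i : I | x ∈ U i}.ncard ≤ N)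
    (finiteMeas : ∀ i, μ (U i) < ⊤)
    (CmU : ℝ) (hCmU0 : 0 ≤ CmU)
    (hcover : ∀ i, ∀ x ∈ U i, ∀ y ∈ U i, m x y ≤ CmU)
    (xp yp : I → X) (hxp : ∀ i, xp i ∈ U i) (hyp : ∀ i, yp i ∈ U i)
    (hB1 : essSup (fun u => ∫⁻ v, ENNReal.ofReal (‖⟪ψ u, φf v⟫‖ * m u v) ∂μ) μ ≠ ⊤)
    (hG1 : essSup (fun v => ∫⁻ y, ENNReal.ofReal (‖⟪SGinv (φf v), φf y⟫‖ * m v y) ∂μ) μ ≠ ⊤)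
    (hG2 : essSup (fun v => ∫⁻ y, ENNReal.ofReal
      (|oscU (fun a b => ⟪SGinv (φf a), φf b⟫) U v y| * m v y) ∂μ) μ ≠ ⊤)
    (hA1 : essSup (fun x => ∫⁻ u, ENNReal.ofReal (‖⟪SFinv (ψ u), ψ x⟫‖ * m u x) ∂μ) μ ≠ ⊤)
    (hA2 : essSup (fun x => ∫⁻ u, ENNReal.ofReal
      (|oscU (fun a b => ⟪SFinv (ψ a), ψ b⟫) U u x| * m u x) ∂μ) μ ≠ ⊤) :
    essSup (fun x => ∫⁻ y, ENNReal.ofReal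
      (|∑' i, ∑' j, ‖⟪ψ (xp i), φf (yp j)⟫‖ *
        (U i).indicator (fun _ => (1 : ℝ)) x *
        (U j).indicator (fun _ => (1 : ℝ)) y| * m x y) ∂μ) μ < ⊤ := by
  classical
  have hmn : ∀ x y : X, (0:ℝ) ≤ m x y := fun x y => le_trans zero_le_one (hm_one x y)
  have hadjF : ∀ a b : H, ⟪SFinv a, b⟫ = ⟪a, SFinv b⟫ := selfadj_inv' hSF hrightF
  have hadjG : ∀ a b : H, ⟪SGinv a, b⟫ = ⟪a, SGinv b⟫ := selfadj_inv' hSG hrightG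
  set c : I → I → ℝ := fun i j => ‖⟪ψ (xp i), φf (yp j)⟫‖ with hcd
  set ind : I → X → ℝ≥0∞ := fun i => (U i).indicator fun _ => (1:ℝ≥0∞) with hindd
  set Fa : X → X → ℝ≥0∞ := fun u x => ENNReal.ofReal (‖⟪SFinv (ψ u), ψ x⟫‖ * m u x) with hFad
  set Fb : X → X → ℝ≥0∞ := fun u x => ENNReal.ofReal
    (|oscU (fun a b => ⟪SFinv (ψ a), ψ b⟫) U u x| * m u x) with hFbd
  set Ga : X → X → ℝ≥0∞ := fun v y => ENNReal.ofReal (‖⟪SGinv (φf v), φf y⟫‖ * m v y) with hGad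
  set Gb : X → X → ℝ≥0∞ := fun v y => ENNReal.ofReal
    (|oscU (fun a b => ⟪SGinv (φf a), φf b⟫) U v y| * m v y) with hGbd
  set Bk : X → X → ℝ≥0∞ := fun u v => ENNReal.ofReal (‖⟪ψ u, φf v⟫‖ * m u v) with hBkd
  set Fh : I → X → ℝ≥0∞ := fun i u => ENNReal.ofReal (‖⟪SFinv (ψ u), ψ (xp i)⟫‖ * m u (xp i))
    with hFhd
  set Gh : I → X → ℝ≥0∞ := fun j v => ENNReal.ofReal (‖⟪SGinv (φf v), φf (yp j)⟫‖ * m v (yp j))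
    with hGhd
  set aa : I → I → ℝ≥0∞ := fun i j => ENNReal.ofReal (c i j * m (xp i) (yp j)) with haad
  -- continuity helpers
  have hmc1 : ∀ x : X, Continuous fun y => m x y :=
    fun x => hm_cont.comp (continuous_const.prodMk continuous_id)
  have hmc2 : ∀ x : X, Continuous fun u => m u x :=
    fun x => hm_cont.comp (continuous_id.prodMk continuous_const)
  have hcRF1 : ∀ x : X, Continuous fun u => (⟪SFinv (ψ u), ψ x⟫ : ℂ) := by
    intro x
    have he : (fun u => (⟪SFinv (ψ u), ψ x⟫ : ℂ)) = fun u => ⟪ψ u, SFinv (ψ x)⟫ := by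
      funext u; exact hadjF _ _
    rw [he]; exact hcontF _
  have hcRF2 : ∀ u : X, Continuous fun x => (⟪SFinv (ψ u), ψ x⟫ : ℂ) := by
    intro u
    have he : (fun x => (⟪SFinv (ψ u), ψ x⟫ : ℂ))
        = fun x => (starRingEnd ℂ) ⟪ψ x, SFinv (ψ u)⟫ := by
      funext x; exact (inner_conj_symm _ _).symm
    rw [he]; exact continuous_star.comp (hcontF _)
  have hcRG1 : ∀ y : X, Continuous fun v => (⟪SGinv (φf v), φf y⟫ : ℂ) := by
    intro y
    have he : (fun v => (⟪SGinv (φf v), φf y⟫ : ℂ)) = fun v => ⟪φf v, SGinv (φf y)⟫ := by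
      funext v; exact hadjG _ _
    rw [he]; exact hcontG _
  have hcRG2 : ∀ v : X, Continuous fun y => (⟪SGinv (φf v), φf y⟫ : ℂ) := by
    intro v
    have he : (fun y => (⟪SGinv (φf v), φf y⟫ : ℂ))
        = fun y => (starRingEnd ℂ) ⟪φf y, SGinv (φf v)⟫ := by
      funext y; exact (inner_conj_symm _ _).symm
    rw [he]; exact continuous_star.comp (hcontG _)
  have hmeasFa : ∀ x : X, Measurable fun u => Fa u x := fun x =>
    (ENNReal.continuous_ofReal.comp (((hcRF1 x).norm).mul (hmc2 x))).measurable
  have hmeasGa : ∀ v : X, Measurable fun y => Ga v y := fun v =>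
    (ENNReal.continuous_ofReal.comp (((hcRG2 v).norm).mul (hmc1 v))).measurable
  -- indicator sums
  have hindsum : ∀ x : X, (∑' i, ind i x) ≤ (N : ℝ≥0∞) := by
    intro x
    have h0 : ∀ i ∉ (hfin x).toFinset, ind i x = 0 := by
      intro i hi
      simp only [Set.Finite.mem_toFinset, Set.mem_setOf_eq] at hi
      simp [hindd, Set.indicator_of_notMem hi]
    rw [tsum_eq_sum h0]
    calc ∑ i ∈ (hfin x).toFinset, ind i x ≤ ∑ i ∈ (hfin x).toFinset, 1 := by
          refine Finset.sum_le_sum fun i _ => ?_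
          simp only [hindd]
          exact Set.indicator_le_self' (fun _ _ => zero_le_one) x
      _ = ((hfin x).toFinset.card : ℝ≥0∞) := by simp
      _ ≤ (N : ℝ≥0∞) := by
          have hc := hcard x
          rw [Set.ncard_eq_toFinset_card _ (hfin x)] at hc
          exact_mod_cast hc
  -- oscillation bounds at sampled points
  have hoscFle : ∀ (u x : X) (i : I), x ∈ U i →
      ‖(⟪SFinv (ψ u), ψ (xp i)⟫ : ℂ)‖ ≤ ‖(⟪SFinv (ψ u), ψ x⟫ : ℂ)‖ +
        |oscU (fun a b => ⟪SFinv (ψ a), ψ b⟫) U u x| := by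
    intro u x i hx
    have h1 : ‖(⟪SFinv (ψ u), ψ (xp i)⟫ : ℂ)‖ ≤ ‖(⟪SFinv (ψ u), ψ x⟫ : ℂ)‖ +
        ‖(⟪SFinv (ψ u), ψ x⟫ : ℂ) - ⟪SFinv (ψ u), ψ (xp i)⟫‖ := by
      have hn := norm_sub_le (⟪SFinv (ψ u), ψ x⟫ : ℂ)
        ((⟪SFinv (ψ u), ψ x⟫ : ℂ) - ⟪SFinv (ψ u), ψ (xp i)⟫)
      rwa [_root_.sub_sub_cancel] at hn
    exact h1.trans (add_le_add_right
      ((le_oscU' (R := fun a b => ⟪SFinv (ψ a), ψ b⟫) (hcRF2 u) relCompact (hfin x) hx (hxp i)).trans (le_abs_self _)) _)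
  have hoscGle : ∀ (v y : X) (j : I), y ∈ U j →
      ‖(⟪SGinv (φf v), φf (yp j)⟫ : ℂ)‖ ≤ ‖(⟪SGinv (φf v), φf y⟫ : ℂ)‖ +
        |oscU (fun a b => ⟪SGinv (φf a), φf b⟫) U v y| := by
    intro v y j hy
    have h1 : ‖(⟪SGinv (φf v), φf (yp j)⟫ : ℂ)‖ ≤ ‖(⟪SGinv (φf v), φf y⟫ : ℂ)‖ +
        ‖(⟪SGinv (φf v), φf y⟫ : ℂ) - ⟪SGinv (φf v), φf (yp j)⟫‖ := by
      have hn := norm_sub_le (⟪SGinv (φf v), φf y⟫ : ℂ)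
        ((⟪SGinv (φf v), φf y⟫ : ℂ) - ⟪SGinv (φf v), φf (yp j)⟫)
      rwa [_root_.sub_sub_cancel] at hn
    exact h1.trans (add_le_add_right
      ((le_oscU' (R := fun a b => ⟪SGinv (φf a), φf b⟫) (hcRG2 v) relCompact (hfin y) hy (hyp j)).trans (le_abs_self _)) _)
  -- pointwise bounds on the sampled reproducing kernels
  have hFh : ∀ (i : I) (x : X), x ∈ U i → ∀ u : X,
      Fh i u ≤ ENNReal.ofReal CmU * (Fa u x + Fb u x) := by
    intro i x hx u
    have hmle : m u (xp i) ≤ m u x * CmU :=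
      (hm_submult u (xp i) x).trans
        (mul_le_mul_of_nonneg_left (hcover i x hx (xp i) (hxp i)) (hmn u x))
    have hreal : ‖(⟪SFinv (ψ u), ψ (xp i)⟫ : ℂ)‖ * m u (xp i) ≤
        CmU * ((‖(⟪SFinv (ψ u), ψ x⟫ : ℂ)‖ * m u x) +
          (|oscU (fun a b => ⟪SFinv (ψ a), ψ b⟫) U u x| * m u x)) := by
      have h2 := mul_le_mul (hoscFle u x i hx) hmle (hmn u (xp i))
        (add_nonneg (norm_nonneg _) (abs_nonneg _))
      calc ‖(⟪SFinv (ψ u), ψ (xp i)⟫ : ℂ)‖ * m u (xp i) ≤ _ := h2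
        _ = _ := by ring
    calc Fh i u ≤ ENNReal.ofReal (CmU * ((‖(⟪SFinv (ψ u), ψ x⟫ : ℂ)‖ * m u x) +
          (|oscU (fun a b => ⟪SFinv (ψ a), ψ b⟫) U u x| * m u x))) :=
          ENNReal.ofReal_le_ofReal hreal
      _ = ENNReal.ofReal CmU * (Fa u x + Fb u x) := by
          rw [ENNReal.ofReal_mul hCmU0, ENNReal.ofReal_add
            (mul_nonneg (norm_nonneg _) (hmn u x)) (mul_nonneg (abs_nonneg _) (hmn u x))]
  have hGh : ∀ (j : I) (y : X), y ∈ U j → ∀ v : X,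
      Gh j v ≤ ENNReal.ofReal CmU * (Ga v y + Gb v y) := by
    intro j y hy v
    have hmle : m v (yp j) ≤ m v y * CmU :=
      (hm_submult v (yp j) y).trans
        (mul_le_mul_of_nonneg_left (hcover j y hy (yp j) (hyp j)) (hmn v y))
    have hreal : ‖(⟪SGinv (φf v), φf (yp j)⟫ : ℂ)‖ * m v (yp j) ≤
        CmU * ((‖(⟪SGinv (φf v), φf y⟫ : ℂ)‖ * m v y) +
          (|oscU (fun a b => ⟪SGinv (φf a), φf b⟫) U v y| * m v y)) := by
      have h2 := mul_le_mul (hoscGle v y j hy) hmle (hmn v (yp j))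
        (add_nonneg (norm_nonneg _) (abs_nonneg _))
      calc ‖(⟪SGinv (φf v), φf (yp j)⟫ : ℂ)‖ * m v (yp j) ≤ _ := h2
        _ = _ := by ring
    calc Gh j v ≤ ENNReal.ofReal (CmU * ((‖(⟪SGinv (φf v), φf y⟫ : ℂ)‖ * m v y) +
          (|oscU (fun a b => ⟪SGinv (φf a), φf b⟫) U v y| * m v y))) :=
          ENNReal.ofReal_le_ofReal hreal
      _ = ENNReal.ofReal CmU * (Ga v y + Gb v y) := by
          rw [ENNReal.ofReal_mul hCmU0, ENNReal.ofReal_add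
            (mul_nonneg (norm_nonneg _) (hmn v y)) (mul_nonneg (abs_nonneg _) (hmn v y))]
  -- the reproducing-formula estimate
  have hstar : ∀ i j, aa i j ≤ ∫⁻ u, Fh i u * (∫⁻ v, Bk u v * Gh j v ∂μ) ∂μ := fun i j =>
    star_bound' hSF hrightF hSG hrightG hadjF hadjG m hm_one hm_symm hm_submult (xp i) (yp j)
  -- essSup constants
  set G1 : ℝ≥0∞ := essSup (fun v => ∫⁻ y, Ga v y ∂μ) μ with hG1d
  set G2 : ℝ≥0∞ := essSup (fun v => ∫⁻ y, Gb v y ∂μ) μ with hG2d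
  set A1 : ℝ≥0∞ := essSup (fun x => ∫⁻ u, Fa u x ∂μ) μ with hA1d
  set A2 : ℝ≥0∞ := essSup (fun x => ∫⁻ u, Fb u x ∂μ) μ with hA2d
  set B1 : ℝ≥0∞ := essSup (fun u => ∫⁻ v, Bk u v ∂μ) μ with hB1d
  have hG1top : G1 ≠ ⊤ := hG1
  have hG2top : G2 ≠ ⊤ := hG2
  have hA1top : A1 ≠ ⊤ := hA1
  have hA2top : A2 ≠ ⊤ := hA2
  have hB1top : B1 ≠ ⊤ := hB1
  set CW : ℝ≥0∞ := (N : ℝ≥0∞) * (ENNReal.ofReal CmU * (G1 + G2)) with hCWd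
  have hCWtop : CW ≠ ⊤ := by
    refine ENNReal.mul_ne_top (ENNReal.natCast_ne_top N) (ENNReal.mul_ne_top
      ENNReal.ofReal_ne_top (ENNReal.add_ne_top.mpr ⟨hG1top, hG2top⟩))
  -- bound on the weighted sum of sampled G-kernels
  have hGwsum : ∀ᵐ v ∂μ, (∑' j, μ (U j) * Gh j v) ≤ CW := by
    filter_upwards [ae_le_essSup (fun v => ∫⁻ y, Ga v y ∂μ),
      ae_le_essSup (fun v => ∫⁻ y, Gb v y ∂μ)] with v hv1 hv2
    have hper : ∀ j, μ (U j) * Gh j v ≤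
        ∫⁻ y, (U j).indicator (fun y => ENNReal.ofReal CmU * (Ga v y + Gb v y)) y ∂μ := by
      intro j
      calc μ (U j) * Gh j v
          = ∫⁻ y, (U j).indicator (fun _ => Gh j v) y ∂μ := by
            rw [lintegral_indicator_const (measU j), mul_comm]
        _ ≤ _ := by
            refine lintegral_mono fun y => ?_
            by_cases hy : y ∈ U j
            · rw [Set.indicator_of_mem hy, Set.indicator_of_mem hy]
              exact hGh j y hy v
            · rw [Set.indicator_of_notMem hy, Set.indicator_of_notMem hy]
    calc (∑' j, μ (U j) * Gh j v)
        ≤ ∑' j, ∫⁻ y, (U j).indicator (fun y => ENNReal.ofReal CmU * (Ga v y + Gb v y)) y ∂μ :=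
          ENNReal.tsum_le_tsum hper
      _ ≤ ∫⁻ y, ∑' j, (U j).indicator (fun y => ENNReal.ofReal CmU * (Ga v y + Gb v y)) y ∂μ :=
          tsum_lintegral_le' _
      _ = ∫⁻ y, (∑' j, ind j y) * (ENNReal.ofReal CmU * (Ga v y + Gb v y)) ∂μ := by
          refine lintegral_congr fun y => ?_
          rw [← ENNReal.tsum_mul_right]
          refine tsum_congr fun j => ?_
          simp only [hindd]
          by_cases hy : y ∈ U j
          · rw [Set.indicator_of_mem hy, Set.indicator_of_mem hy, one_mul]
          · rw [Set.indicator_of_notMem hy, Set.indicator_of_notMem hy, zero_mul]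
      _ ≤ ∫⁻ y, (N : ℝ≥0∞) * (ENNReal.ofReal CmU * (Ga v y + Gb v y)) ∂μ :=
          lintegral_mono fun y => mul_le_mul_left (hindsum y) _
      _ = (N : ℝ≥0∞) * (ENNReal.ofReal CmU * ∫⁻ y, (Ga v y + Gb v y) ∂μ) := by
          rw [lintegral_const_mul' _ _ (ENNReal.natCast_ne_top N)]
          congr 1
          rw [lintegral_const_mul' _ _ ENNReal.ofReal_ne_top]
      _ ≤ CW := by
          rw [hCWd]
          refine mul_le_mul_right (mul_le_mul_right ?_ _) _
          rw [lintegral_add_left (hmeasGa v)]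
          exact add_le_add hv1 hv2
  -- the inner double integral is uniformly bounded
  have hinner : ∀ᵐ u ∂μ, (∫⁻ v, Bk u v * (∑' j, μ (U j) * Gh j v) ∂μ) ≤ CW * B1 := by
    filter_upwards [ae_le_essSup (fun u => ∫⁻ v, Bk u v ∂μ)] with u hu
    calc ∫⁻ v, Bk u v * (∑' j, μ (U j) * Gh j v) ∂μ
        ≤ ∫⁻ v, Bk u v * CW ∂μ :=
          lintegral_mono_ae (hGwsum.mono fun v hv => mul_le_mul_right hv _)
      _ = (∫⁻ v, Bk u v ∂μ) * CW := lintegral_mul_const' _ _ hCWtop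
      _ ≤ B1 * CW := mul_le_mul_left hu _
      _ = CW * B1 := mul_comm _ _
  have hCWB1top : CW * B1 ≠ ⊤ := ENNReal.mul_ne_top hCWtop hB1top
  -- the summed star estimate
  have hSi : ∀ i, (∑' j, aa i j * μ (U j)) ≤
      ∫⁻ u, Fh i u * (∫⁻ v, Bk u v * (∑' j, μ (U j) * Gh j v) ∂μ) ∂μ := by
    intro i
    have hstep : ∀ j, aa i j * μ (U j) ≤
        ∫⁻ u, Fh i u * (∫⁻ v, Bk u v * (μ (U j) * Gh j v) ∂μ) ∂μ := by
      intro j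
      calc aa i j * μ (U j)
          ≤ (∫⁻ u, Fh i u * (∫⁻ v, Bk u v * Gh j v ∂μ) ∂μ) * μ (U j) :=
            mul_le_mul_left (hstar i j) _
        _ = ∫⁻ u, (Fh i u * (∫⁻ v, Bk u v * Gh j v ∂μ)) * μ (U j) ∂μ :=
            (lintegral_mul_const' _ _ (finiteMeas j).ne).symm
        _ = ∫⁻ u, Fh i u * (∫⁻ v, Bk u v * (μ (U j) * Gh j v) ∂μ) ∂μ := by
            refine lintegral_congr fun u => ?_
            calc (Fh i u * (∫⁻ v, Bk u v * Gh j v ∂μ)) * μ (U j)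
                = Fh i u * ((∫⁻ v, Bk u v * Gh j v ∂μ) * μ (U j)) := by ring
              _ = Fh i u * (∫⁻ v, (Bk u v * Gh j v) * μ (U j) ∂μ) := by
                  rw [lintegral_mul_const' _ _ (finiteMeas j).ne]
              _ = Fh i u * (∫⁻ v, Bk u v * (μ (U j) * Gh j v) ∂μ) := by
                  congr 1; exact lintegral_congr fun v => by ring
    calc (∑' j, aa i j * μ (U j))
        ≤ ∑' j, ∫⁻ u, Fh i u * (∫⁻ v, Bk u v * (μ (U j) * Gh j v) ∂μ) ∂μ :=
          ENNReal.tsum_le_tsum hstep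
      _ ≤ ∫⁻ u, ∑' j, Fh i u * (∫⁻ v, Bk u v * (μ (U j) * Gh j v) ∂μ) ∂μ :=
          tsum_lintegral_le' _
      _ = ∫⁻ u, Fh i u * (∑' j, ∫⁻ v, Bk u v * (μ (U j) * Gh j v) ∂μ) ∂μ :=
          lintegral_congr fun u => ENNReal.tsum_mul_left
      _ ≤ ∫⁻ u, Fh i u * (∫⁻ v, ∑' j, Bk u v * (μ (U j) * Gh j v) ∂μ) ∂μ :=
          lintegral_mono fun u => mul_le_mul_right (tsum_lintegral_le' _) _
      _ = ∫⁻ u, Fh i u * (∫⁻ v, Bk u v * (∑' j, μ (U j) * Gh j v) ∂μ) ∂μ := by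
          refine lintegral_congr fun u => ?_
          congr 1
          exact lintegral_congr fun v => ENNReal.tsum_mul_left
  have hSi2 : ∀ i, (∑' j, aa i j * μ (U j)) ≤ (CW * B1) * ∫⁻ u, Fh i u ∂μ := by
    intro i
    refine (hSi i).trans ?_
    calc ∫⁻ u, Fh i u * (∫⁻ v, Bk u v * (∑' j, μ (U j) * Gh j v) ∂μ) ∂μ
        ≤ ∫⁻ u, Fh i u * (CW * B1) ∂μ :=
          lintegral_mono_ae (hinner.mono fun u hu => mul_le_mul_right hu _)
      _ = (∫⁻ u, Fh i u ∂μ) * (CW * B1) := lintegral_mul_const' _ _ hCWB1top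
      _ = (CW * B1) * ∫⁻ u, Fh i u ∂μ := mul_comm _ _
  -- a.e. bound on the sampled F-kernel integrals
  have hFh_int : ∀ᵐ x ∂μ, ∀ i, x ∈ U i →
      (∫⁻ u, Fh i u ∂μ) ≤ ENNReal.ofReal CmU * (A1 + A2) := by
    filter_upwards [ae_le_essSup (fun x => ∫⁻ u, Fa u x ∂μ),
      ae_le_essSup (fun x => ∫⁻ u, Fb u x ∂μ)] with x h1 h2
    intro i hx
    calc ∫⁻ u, Fh i u ∂μ
        ≤ ∫⁻ u, ENNReal.ofReal CmU * (Fa u x + Fb u x) ∂μ := lintegral_mono (hFh i x hx)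
      _ = ENNReal.ofReal CmU * (∫⁻ u, Fa u x ∂μ + ∫⁻ u, Fb u x ∂μ) := by
          rw [lintegral_const_mul' _ _ ENNReal.ofReal_ne_top, lintegral_add_left (hmeasFa x)]
      _ ≤ _ := mul_le_mul_right (add_le_add h1 h2) _
  -- measurability of the elementary summands
  have hmeasT : ∀ (x : X) (i j : I),
      Measurable fun y => ind i x * ind j y * ENNReal.ofReal (c i j * m x y) := by
    intro x i j
    refine Measurable.mul (Measurable.mul measurable_const ?_) ?_
    · simp only [hindd]; exact measurable_const.indicator (measU j)
    · exact (ENNReal.continuous_ofReal.comp (continuous_const.mul (hmc1 x))).measurable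
  -- pointwise domination of the sampled kernel
  have hpoint : ∀ x y : X, ENNReal.ofReal
      (|∑' i, ∑' j, ‖⟪ψ (xp i), φf (yp j)⟫‖ *
        (U i).indicator (fun _ => (1 : ℝ)) x *
        (U j).indicator (fun _ => (1 : ℝ)) y| * m x y) ≤
      ∑' i, ∑' j, ind i x * ind j y * ENNReal.ofReal (c i j * m x y) := by
    intro x y
    have hnn : ∀ i j, 0 ≤ ‖(⟪ψ (xp i), φf (yp j)⟫ : ℂ)‖ *
        (U i).indicator (fun _ => (1 : ℝ)) x * (U j).indicator (fun _ => (1 : ℝ)) y :=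
      fun i j => mul_nonneg (mul_nonneg (norm_nonneg _)
        (Set.indicator_nonneg (fun _ _ => zero_le_one) x))
        (Set.indicator_nonneg (fun _ _ => zero_le_one) y)
    rw [abs_of_nonneg (tsum_nonneg fun i => tsum_nonneg fun j => hnn i j)]
    rw [← tsum_mul_right]
    refine le_trans (ofReal_tsum_le' _
      (fun i => mul_nonneg (tsum_nonneg fun j => hnn i j) (hmn x y))) ?_
    refine ENNReal.tsum_le_tsum fun i => ?_
    rw [← tsum_mul_right]
    refine le_trans (ofReal_tsum_le' _ (fun j => mul_nonneg (hnn i j) (hmn x y))) ?_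
    refine ENNReal.tsum_le_tsum fun j => ?_
    simp only [hindd]
    by_cases hix : x ∈ U i
    · by_cases hjy : y ∈ U j
      · rw [Set.indicator_of_mem hix, Set.indicator_of_mem hjy,
          Set.indicator_of_mem hix, Set.indicator_of_mem hjy]
        rw [mul_one, mul_one, one_mul, one_mul]
      · rw [Set.indicator_of_notMem hjy, Set.indicator_of_notMem hjy]
        simp
    · rw [Set.indicator_of_notMem hix, Set.indicator_of_notMem hix]
      simp
  -- per-cell integral estimate
  have hTj : ∀ (x : X) (i j : I),
      (∫⁻ y, ind i x * ind j y * ENNReal.ofReal (c i j * m x y) ∂μ) ≤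
      ind i x * (ENNReal.ofReal (CmU * CmU) * (aa i j * μ (U j))) := by
    intro x i j
    by_cases hx : x ∈ U i
    · have hind1 : ind i x = 1 := by simp only [hindd]; exact Set.indicator_of_mem hx _
      rw [hind1]
      simp only [one_mul]
      have hpt : ∀ y, ind j y * ENNReal.ofReal (c i j * m x y) ≤
          (U j).indicator (fun _ => ENNReal.ofReal (CmU * CmU) * aa i j) y := by
        intro y
        simp only [hindd]
        by_cases hy : y ∈ U j
        · rw [Set.indicator_of_mem hy, Set.indicator_of_mem hy, one_mul]
          have hm0 : m x y ≤ (CmU * CmU) * m (xp i) (yp j) := by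
            calc m x y ≤ m x (yp j) * m (yp j) y := hm_submult x y (yp j)
              _ ≤ m x (yp j) * CmU :=
                  mul_le_mul_of_nonneg_left (hcover j (yp j) (hyp j) y hy) (hmn x (yp j))
              _ ≤ (m x (xp i) * m (xp i) (yp j)) * CmU :=
                  mul_le_mul_of_nonneg_right (hm_submult x (yp j) (xp i)) hCmU0
              _ ≤ (CmU * m (xp i) (yp j)) * CmU := by
                  refine mul_le_mul_of_nonneg_right
                    (mul_le_mul_of_nonneg_right (hcover i x hx (xp i) (hxp i)) (hmn _ _)) hCmU0
              _ = (CmU * CmU) * m (xp i) (yp j) := by ring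
          calc ENNReal.ofReal (c i j * m x y)
              ≤ ENNReal.ofReal ((CmU * CmU) * (c i j * m (xp i) (yp j))) := by
                refine ENNReal.ofReal_le_ofReal ?_
                calc c i j * m x y ≤ c i j * ((CmU * CmU) * m (xp i) (yp j)) :=
                      mul_le_mul_of_nonneg_left hm0 (norm_nonneg _)
                  _ = (CmU * CmU) * (c i j * m (xp i) (yp j)) := by ring
            _ = ENNReal.ofReal (CmU * CmU) * aa i j :=
                ENNReal.ofReal_mul (mul_nonneg hCmU0 hCmU0)
        · rw [Set.indicator_of_notMem hy, Set.indicator_of_notMem hy, zero_mul]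
      calc ∫⁻ y, ind j y * ENNReal.ofReal (c i j * m x y) ∂μ
          ≤ ∫⁻ y, (U j).indicator (fun _ => ENNReal.ofReal (CmU * CmU) * aa i j) y ∂μ :=
            lintegral_mono hpt
        _ = (ENNReal.ofReal (CmU * CmU) * aa i j) * μ (U j) := lintegral_indicator_const (measU j) _
        _ = ENNReal.ofReal (CmU * CmU) * (aa i j * μ (U j)) := by ring
    · have hind0 : ind i x = 0 := by simp only [hindd]; exact Set.indicator_of_notMem hx _
      rw [hind0]
      simp
  -- assemble the row bound
  set K : ℝ≥0∞ := ENNReal.ofReal (CmU * CmU) *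
    ((CW * B1) * (ENNReal.ofReal CmU * (A1 + A2))) with hKd
  have hKtop : K ≠ ⊤ := ENNReal.mul_ne_top ENNReal.ofReal_ne_top
    (ENNReal.mul_ne_top hCWB1top (ENNReal.mul_ne_top ENNReal.ofReal_ne_top
      (ENNReal.add_ne_top.mpr ⟨hA1top, hA2top⟩)))
  have hrow : ∀ᵐ x ∂μ, (∫⁻ y, ENNReal.ofReal
      (|∑' i, ∑' j, ‖⟪ψ (xp i), φf (yp j)⟫‖ *
        (U i).indicator (fun _ => (1 : ℝ)) x *
        (U j).indicator (fun _ => (1 : ℝ)) y| * m x y) ∂μ) ≤ (N : ℝ≥0∞) * K := by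
    filter_upwards [hFh_int] with x hFx
    refine le_trans (lintegral_mono fun y => hpoint x y) ?_
    calc ∫⁻ y, (∑' i, ∑' j, ind i x * ind j y * ENNReal.ofReal (c i j * m x y)) ∂μ
        = ∑' i, ∫⁻ y, (∑' j, ind i x * ind j y * ENNReal.ofReal (c i j * m x y)) ∂μ :=
          lintegral_tsum fun i =>
            (Measurable.ennreal_tsum fun j => hmeasT x i j).aemeasurable
      _ = ∑' i, ∑' j, ∫⁻ y, ind i x * ind j y * ENNReal.ofReal (c i j * m x y) ∂μ :=
          tsum_congr fun i => lintegral_tsum fun j => (hmeasT x i j).aemeasurable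
      _ ≤ ∑' i, ∑' j, ind i x * (ENNReal.ofReal (CmU * CmU) * (aa i j * μ (U j))) :=
          ENNReal.tsum_le_tsum fun i => ENNReal.tsum_le_tsum fun j => hTj x i j
      _ = ∑' i, ind i x * (ENNReal.ofReal (CmU * CmU) * (∑' j, aa i j * μ (U j))) := by
          refine tsum_congr fun i => ?_
          rw [ENNReal.tsum_mul_left, ENNReal.tsum_mul_left]
      _ ≤ ∑' i, ind i x * K := by
          refine ENNReal.tsum_le_tsum fun i => ?_
          by_cases hx : x ∈ U i
          · refine mul_le_mul_right ?_ _
            rw [hKd]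
            refine mul_le_mul_right ?_ _
            exact le_trans (hSi2 i) (mul_le_mul_right (hFx i hx) _)
          · have h0 : ind i x = 0 := by
              simp only [hindd]; exact Set.indicator_of_notMem hx _
            rw [h0, zero_mul, zero_mul]
      _ = (∑' i, ind i x) * K := ENNReal.tsum_mul_right
      _ ≤ (N : ℝ≥0∞) * K := mul_le_mul_left (hindsum x) _
  refine lt_of_le_of_lt (essSup_le_of_ae_le _ hrow) ?_
  exact lt_top_iff_ne_top.mpr (ENNReal.mul_ne_top (ENNReal.natCast_ne_top N) hKtop)

/-- Sampling two mutually `A_m`-localized continuous frames along a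
common moderate admissible covering yields `A_m^♭`-localized discrete frames: the kernel
`Λ_U(x,y) = ∑_{i,j} |⟨φ_{y_j}, ψ_{x_i}⟩| χ_{U_i}(x) χ_{U_j}(y)` has finite `A_m`-norm.
(The paper's `⟨a,b⟩` is `⟪b,a⟫` in Mathlib's convention.) -/
theorem sampled_crossed_Gramian_localized
    {X : Type*} [TopologicalSpace X] [T2Space X] [LocallyCompactSpace X]
    [SigmaCompactSpace X] [MeasurableSpace X] [BorelSpace X]
    (μ : MeasureTheory.Measure X) [μ.Regular] [μ.IsOpenPosMeasure]
    {H : Type*} [NormedAddCommGroup H] [InnerProductSpace ℂ H] [CompleteSpace H]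
    [TopologicalSpace.SeparableSpace H]
    -- the two continuous frames `F = (ψ_x)` and `G = (φ_x)`
    (ψ φf : X → H)
    (hcontF : ∀ f : H, Continuous fun x => ⟪ψ x, f⟫)
    (hcontG : ∀ f : H, Continuous fun x => ⟪φf x, f⟫)
    (CF₁ CF₂ : ℝ) (hCF₁ : 0 < CF₁) (hCF₁₂ : CF₁ ≤ CF₂)
    (hIntF : ∀ f : H, Integrable (fun x => ‖⟪ψ x, f⟫‖ ^ 2) μ)
    (hlowF : ∀ f : H, CF₁ * ‖f‖ ^ 2 ≤ ∫ x, ‖⟪ψ x, f⟫‖ ^ 2 ∂μ)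
    (hupF : ∀ f : H, ∫ x, ‖⟪ψ x, f⟫‖ ^ 2 ∂μ ≤ CF₂ * ‖f‖ ^ 2)
    (CG₁ CG₂ : ℝ) (hCG₁ : 0 < CG₁) (hCG₁₂ : CG₁ ≤ CG₂)
    (hIntG : ∀ f : H, Integrable (fun x => ‖⟪φf x, f⟫‖ ^ 2) μ)
    (hlowG : ∀ f : H, CG₁ * ‖f‖ ^ 2 ≤ ∫ x, ‖⟪φf x, f⟫‖ ^ 2 ∂μ)
    (hupG : ∀ f : H, ∫ x, ‖⟪φf x, f⟫‖ ^ 2 ∂μ ≤ CG₂ * ‖f‖ ^ 2)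
    -- the frame operators and their inverses
    (SF : H →L[ℂ] H)
    (hSF : ∀ f g : H, ⟪g, SF f⟫ = ∫ x, ⟪ψ x, f⟫ * ⟪g, ψ x⟫ ∂μ)
    (SFinv : H →L[ℂ] H)
    (hleftF : ∀ f, SFinv (SF f) = f) (hrightF : ∀ f, SF (SFinv f) = f)
    (SG : H →L[ℂ] H)
    (hSG : ∀ f g : H, ⟪g, SG f⟫ = ∫ x, ⟪φf x, f⟫ * ⟪g, φf x⟫ ∂μ)
    (SGinv : H →L[ℂ] H)
    (hleftG : ∀ f, SGinv (SG f) = f) (hrightG : ∀ f, SG (SGinv f) = f)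
    -- admissible weight `m`
    (m : X → X → ℝ)
    (hm_cont : Continuous fun p : X × X => m p.1 p.2)
    (hm_one : ∀ x y, 1 ≤ m x y)
    (hm_symm : ∀ x y, m x y = m y x)
    (hm_submult : ∀ x y z, m x y ≤ m x z * m z y)
    (hm_diag : ∃ Cm : ℝ, ∀ x, m x x ≤ Cm)
    -- mutual localization and `R_F, R_G ∈ A_m`
    (hGFG : amNorm μ m (fun x y => ‖⟪ψ x, φf y⟫‖) < ⊤)
    (hRF : amNorm μ m (fun x y => ‖⟪SFinv (ψ x), ψ y⟫‖) < ⊤)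
    (hRG : amNorm μ m (fun x y => ‖⟪SGinv (φf x), φf y⟫‖) < ⊤)
    -- a common moderate admissible covering with the `m`-cover condition
    {I : Type*} [Countable I]
    (𝒰 : ModCover X μ I)
    (CmU : ℝ) (hcover : ∀ i, ∀ x ∈ 𝒰.U i, ∀ y ∈ 𝒰.U i, m x y ≤ CmU)
    -- both frames possess property `D[δ,m]` with respect to `U`
    (δ : ℝ) (hδ : 0 < δ)
    (hoscF : amNorm μ m (oscU (fun x y => ⟪SFinv (ψ x), ψ y⟫) 𝒰.U) <
      ENNReal.ofReal δ)
    (hoscG : amNorm μ m (oscU (fun x y => ⟪SGinv (φf x), φf y⟫) 𝒰.U) <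
      ENNReal.ofReal δ)
    -- sampling points
    (xp yp : I → X) (hxp : ∀ i, xp i ∈ 𝒰.U i) (hyp : ∀ i, yp i ∈ 𝒰.U i) :
    amNorm μ m
      (fun x y => ∑' i, ∑' j, ‖⟪ψ (xp i), φf (yp j)⟫‖ *
        (𝒰.U i).indicator (fun _ => (1 : ℝ)) x *
        (𝒰.U j).indicator (fun _ => (1 : ℝ)) y) < ⊤ := by
  classical
  rcases isEmpty_or_nonempty I with hI | hI
  · simp only [amNorm, tsum_empty]
    have hzero : ∀ f : X → ℝ≥0∞, (∀ x, f x = 0) → essSup f μ < ⊤ := by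
      intro f hf
      refine lt_of_le_of_lt (essSup_le_of_ae_le 0
        (Filter.Eventually.of_forall fun x => le_of_eq (hf x))) ?_
      simp
    refine max_lt (hzero _ fun x => ?_) (hzero _ fun y => ?_) <;> simp
  · obtain ⟨i0⟩ := hI
    obtain ⟨x0, hx0⟩ := 𝒰.interiorNonempty i0
    have hx0' : x0 ∈ 𝒰.U i0 := interior_subset hx0
    have hCmU0 : (0:ℝ) ≤ CmU :=
      zero_le_one.trans (le_trans (hm_one x0 x0) (hcover i0 x0 hx0' x0 hx0'))
    have hfin : ∀ x : X, {i : I | x ∈ 𝒰.U i}.Finite := by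
      intro x
      rcases Set.eq_empty_or_nonempty {i : I | x ∈ 𝒰.U i} with h | ⟨j0, hj0⟩
      · rw [h]; exact Set.finite_empty
      · exact (𝒰.overlapFin j0).subset fun i hi => ⟨x, hi, hj0⟩
    have hcard : ∀ x : X, {i : I | x ∈ 𝒰.U i}.ncard ≤ 𝒰.N := by
      intro x
      rcases Set.eq_empty_or_nonempty {i : I | x ∈ 𝒰.U i} with h | ⟨j0, hj0⟩
      · rw [h]; simp
      · exact le_trans (Set.ncard_le_ncard
          (fun i hi => show (𝒰.U i ∩ 𝒰.U j0).Nonempty from ⟨x, hi, hj0⟩)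
          (𝒰.overlapFin j0)) (𝒰.overlapBound j0)
    simp only [amNorm, abs_norm] at hGFG hRF hRG
    simp only [amNorm] at hoscF hoscG
    obtain ⟨hGFG1, hGFG2⟩ := max_lt_iff.mp hGFG
    obtain ⟨hRF1, hRF2⟩ := max_lt_iff.mp hRF
    obtain ⟨hRG1, hRG2⟩ := max_lt_iff.mp hRG
    obtain ⟨hoF1, hoF2⟩ := max_lt_iff.mp hoscF
    obtain ⟨hoG1, hoG2⟩ := max_lt_iff.mp hoscG
    simp only [amNorm]
    refine max_lt ?_ ?_
    · exact row_bound μ ψ φf hcontF hcontG SF hSF SFinv hrightF SG hSG SGinv hrightG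
        m hm_cont hm_one hm_symm hm_submult 𝒰.U 𝒰.measU 𝒰.relCompact 𝒰.N hfin hcard
        𝒰.finiteMeas CmU hCmU0 hcover xp yp hxp hyp
        hGFG1.ne hRG1.ne (hoG1.trans ENNReal.ofReal_lt_top).ne
        hRF2.ne (hoF2.trans ENNReal.ofReal_lt_top).ne
    · -- column bound via the transposed kernel
      have hswap : ∀ x y : X,
          (∑' i, ∑' j, ‖⟪φf (yp i), ψ (xp j)⟫‖ *
            (𝒰.U i).indicator (fun _ => (1:ℝ)) y *
            (𝒰.U j).indicator (fun _ => (1:ℝ)) x)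
          = ∑' i, ∑' j, ‖⟪ψ (xp i), φf (yp j)⟫‖ *
            (𝒰.U i).indicator (fun _ => (1:ℝ)) x *
            (𝒰.U j).indicator (fun _ => (1:ℝ)) y := by
        intro x y
        have hzt : ∀ (z : X) (i : I), i ∉ (hfin z).toFinset → z ∉ 𝒰.U i := by
          intro z i hi h
          exact hi ((hfin z).mem_toFinset.mpr h)
        have hL : (∑' i, ∑' j, ‖⟪φf (yp i), ψ (xp j)⟫‖ *
              (𝒰.U i).indicator (fun _ => (1:ℝ)) y *
              (𝒰.U j).indicator (fun _ => (1:ℝ)) x)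
            = ∑ i ∈ (hfin y).toFinset, ∑ j ∈ (hfin x).toFinset,
              ‖⟪φf (yp i), ψ (xp j)⟫‖ *
              (𝒰.U i).indicator (fun _ => (1:ℝ)) y *
              (𝒰.U j).indicator (fun _ => (1:ℝ)) x := by
          rw [tsum_eq_sum (s := (hfin y).toFinset) ?_]
          · refine Finset.sum_congr rfl fun i _ => ?_
            rw [tsum_eq_sum (s := (hfin x).toFinset) ?_]
            intro j hj
            rw [Set.indicator_of_notMem (hzt x j hj), mul_zero]
          · intro i hi
            have h0 : ∀ j : I, ‖⟪φf (yp i), ψ (xp j)⟫‖ *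
                (𝒰.U i).indicator (fun _ => (1:ℝ)) y *
                (𝒰.U j).indicator (fun _ => (1:ℝ)) x = 0 := fun j => by
              rw [Set.indicator_of_notMem (hzt y i hi), mul_zero, zero_mul]
            rw [tsum_congr h0, tsum_zero]
        have hR : (∑' i, ∑' j, ‖⟪ψ (xp i), φf (yp j)⟫‖ *
              (𝒰.U i).indicator (fun _ => (1:ℝ)) x *
              (𝒰.U j).indicator (fun _ => (1:ℝ)) y)
            = ∑ i ∈ (hfin x).toFinset, ∑ j ∈ (hfin y).toFinset,
              ‖⟪ψ (xp i), φf (yp j)⟫‖ *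
              (𝒰.U i).indicator (fun _ => (1:ℝ)) x *
              (𝒰.U j).indicator (fun _ => (1:ℝ)) y := by
          rw [tsum_eq_sum (s := (hfin x).toFinset) ?_]
          · refine Finset.sum_congr rfl fun i _ => ?_
            rw [tsum_eq_sum (s := (hfin y).toFinset) ?_]
            intro j hj
            rw [Set.indicator_of_notMem (hzt y j hj), mul_zero]
          · intro i hi
            have h0 : ∀ j : I, ‖⟪ψ (xp i), φf (yp j)⟫‖ *
                (𝒰.U i).indicator (fun _ => (1:ℝ)) x *
                (𝒰.U j).indicator (fun _ => (1:ℝ)) y = 0 := fun j => by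
              rw [Set.indicator_of_notMem (hzt x i hi), mul_zero, zero_mul]
            rw [tsum_congr h0, tsum_zero]
        rw [hL, hR, Finset.sum_comm]
        refine Finset.sum_congr rfl fun i _ => Finset.sum_congr rfl fun j _ => ?_
        rw [norm_inner_symm]
        ring
      have hcol := row_bound μ φf ψ hcontG hcontF SG hSG SGinv hrightG SF hSF SFinv hrightF
        m hm_cont hm_one hm_symm hm_submult 𝒰.U 𝒰.measU 𝒰.relCompact 𝒰.N hfin hcard
        𝒰.finiteMeas CmU hCmU0 hcover yp xp hyp hxp
        (by
          have he : (fun u => ∫⁻ v, ENNReal.ofReal (‖⟪φf u, ψ v⟫‖ * m u v) ∂μ)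
              = fun y => ∫⁻ x, ENNReal.ofReal (‖⟪ψ x, φf y⟫‖ * m x y) ∂μ := by
            funext u
            refine lintegral_congr fun v => ?_
            rw [norm_inner_symm, hm_symm]
          rw [he]
          exact hGFG2.ne)
        hRF1.ne (hoF1.trans ENNReal.ofReal_lt_top).ne
        hRG2.ne (hoG2.trans ENNReal.ofReal_lt_top).ne
      have he2 : (fun y => ∫⁻ x, ENNReal.ofReal
          (|∑' i, ∑' j, ‖⟪ψ (xp i), φf (yp j)⟫‖ *
            (𝒰.U i).indicator (fun _ => (1:ℝ)) x *
            (𝒰.U j).indicator (fun _ => (1:ℝ)) y| * m x y) ∂μ)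
          = fun y => ∫⁻ x, ENNReal.ofReal
          (|∑' i, ∑' j, ‖⟪φf (yp i), ψ (xp j)⟫‖ *
            (𝒰.U i).indicator (fun _ => (1:ℝ)) y *
            (𝒰.U j).indicator (fun _ => (1:ℝ)) x| * m y x) ∂μ := by
        funext y
        refine lintegral_congr fun x => ?_
        rw [hswap x y, hm_symm x y]
      rw [he2]
      exact hcol
end
end
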